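/- The following are equivalent: (c₂) 𝒩₂ := ⋃_{t∈T} co cone(𝒰_t ∪ {(0_{X*},1)}) is a closed and convex subset of X*×ℝ (weak*-topology on X* times the usual topology on ℝ); (d₂) for every c ∈ X* with inf(RLIP_c) > −∞ there exist t̄ ∈ T and λ̄ ∈ ℝ₊^{(𝒰)} such that c = −∑_{u∈supp λ̄} λ̄_u u_{t̄}¹ and −∑_{u∈supp λ̄} λ̄_u u_{t̄}² = inf(RLIP_c) (stable robust strong duality for the pair (RLIP_c)–(RLID²_c)). -/

import Mathlib

open Pointwise

variable {X : Type*} [AddCommGroup X] [Module ℝ X] [TopologicalSpace X]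
  [IsTopologicalAddGroup X] [ContinuousSMul ℝ X] [LocallyConvexSpace ℝ X] [T2Space X]
  {T : Type*}

/-- The cone generated by a set `A`: `cone A = {λa : λ ≥ 0, a ∈ A}`. -/
def coneSet {E : Type*} [SMul ℝ E] (A : Set E) : Set E :=
  {p | ∃ l : ℝ, 0 ≤ l ∧ ∃ a ∈ A, p = l • a}

/-- The optimal value of the robust primal problem (RLIP_c). -/
noncomputable def infRLIP (U : T → Set (WeakDual ℝ X × ℝ)) (c : WeakDual ℝ X) : EReal :=
  ⨅ x : {x : X | ∀ t, ∀ v ∈ U t, v.1 x ≤ v.2}, ((c x.1 : ℝ) : EReal)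

/-!
Let `K` be the cone of the linear inequalities `(x*, r)` that are valid on the feasible set `F`.
Each `co cone(𝒰_t ∪ {(0,1)})` is the conical hull of `𝒰_t ∪ {(0,1)}` and lies in `K` (weak
duality), and `K` is weak*-closed and convex; (c₂) and (d₂) are both equivalent to
`𝒩₂ = K`. If `𝒩₂` is closed and convex it is a closed convex cone; a point of `K` outside it is
separated from it by a functional `(x*, r) ↦ ⟨x*, x₀⟩ + r s₀`, and `x₀` then produces a
feasible point violating that inequality. So `(-c, -inf(RLIP_c)) ∈ K = 𝒩₂`, and its
representation as a conic combination is an optimal dual solution. Conversely, dual attainment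
for `c = -x*` writes any `(x*, r) ∈ K` as a conic combination of points of one `𝒰_t` plus a
nonnegative multiple of `(0, 1)`.
-/

section ConicalHull

variable {M : Type*} [AddCommGroup M] [Module ℝ M]

def pointedConeOfConvex (S : Set M) (hS : Convex ℝ S) (hne : S.Nonempty)
    (hsmul : ∀ x ∈ S, ∀ a : ℝ, 0 ≤ a → a • x ∈ S) : PointedCone ℝ M :=
  PointedCone.ofConeComb S hne fun x hx y hy a ha b hb => by
    have hmid := hS (hsmul x hx a ha) (hsmul y hy b hb) (by norm_num : (0 : ℝ) ≤ 1 / 2)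
      (by norm_num : (0 : ℝ) ≤ 1 / 2) (by norm_num)
    simpa [smul_add, smul_smul] using hsmul _ hmid 2 zero_le_two

theorem coneSet_subset_hull (A : Set M) : coneSet A ⊆ PointedCone.hull ℝ A := by
  rintro _ ⟨l, hl, a, ha, rfl⟩
  exact (PointedCone.hull ℝ A).smul_mem hl (PointedCone.subset_hull ha)

theorem smul_mem_convexHull_coneSet {A : Set M} {l : ℝ} (hl : 0 ≤ l) {p : M}
    (hp : p ∈ convexHull ℝ (coneSet A)) : l • p ∈ convexHull ℝ (coneSet A) := by
  have h := Set.smul_mem_smul_set (a := l) hp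
  rw [← convexHull_smul] at h
  refine convexHull_mono ?_ h
  rintro _ ⟨_, ⟨l', hl', a, ha, rfl⟩, rfl⟩
  exact ⟨l * l', mul_nonneg hl hl', a, ha, smul_smul l l' a⟩

theorem convexHull_coneSet_eq_hull {A : Set M} (hA : A.Nonempty) :
    convexHull ℝ (coneSet A) = PointedCone.hull ℝ A := by
  refine (convexHull_min (coneSet_subset_hull A) (PointedCone.convex _)).antisymm ?_
  obtain ⟨a, ha⟩ := hA
  have h0 : (0 : M) ∈ convexHull ℝ (coneSet A) :=
    subset_convexHull ℝ _ ⟨0, le_rfl, a, ha, (zero_smul ℝ a).symm⟩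
  let C := pointedConeOfConvex _ (convex_convexHull ℝ (coneSet A)) ⟨0, h0⟩
    fun p hp l hl => smul_mem_convexHull_coneSet hl hp
  exact (Submodule.span_le (p := C)).2 fun b hb =>
    subset_convexHull ℝ _ ⟨1, zero_le_one, b, hb, (one_smul ℝ b).symm⟩

theorem finsuppSum_mem_hull {T : Type*} (A : T → Set M) (t : T)
    (μ : {u : T → M // ∀ s, u s ∈ A s} →₀ ℝ) (hμ : ∀ u, 0 ≤ μ u) :
    (μ.sum fun u a => a • u.1 t) ∈ PointedCone.hull ℝ (A t) :=
  Submodule.finsuppSum_mem _ _ _ _ fun u _ =>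
    PointedCone.smul_mem _ (hμ u) (PointedCone.subset_hull (u.2 t))

theorem exists_finsupp_of_mem_hull {T : Type*} {A : T → Set M} (hA : ∀ s, (A s).Nonempty)
    {t : T} {p : M} (hp : p ∈ PointedCone.hull ℝ (A t)) :
    ∃ μ : {u : T → M // ∀ s, u s ∈ A s} →₀ ℝ,
      (∀ u, 0 ≤ μ u) ∧ (μ.sum fun u a => a • u.1 t) = p := by
  classical
  obtain ⟨c, hc, hc0, rfl⟩ := PointedCone.mem_hull_set.1 hp
  choose u₀ hu₀ using hA
  let g : M → {u : T → M // ∀ s, u s ∈ A s} := fun a =>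
    if ha : a ∈ A t then
      ⟨Function.update u₀ t a, (Function.forall_update_iff u₀ (p := fun s x => x ∈ A s)).2
        ⟨ha, fun s _ => hu₀ s⟩⟩
    else ⟨u₀, hu₀⟩
  refine ⟨c.mapDomain g, Finsupp.mapDomain_nonneg hc0, ?_⟩
  rw [Finsupp.sum_mapDomain_index
    (h := fun (u : {u : T → M // ∀ s, u s ∈ A s}) (a : ℝ) => a • u.1 t) (fun _ => zero_smul ℝ _)
    (fun _ _ _ => add_smul _ _ _)]
  refine Finsupp.sum_congr fun a ha => ?_
  simp [g, hc ha]

end ConicalHull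

theorem Finsupp.sum_smul_prodMk {ι M N : Type*} [AddCommMonoid M] [Module ℝ M]
    [AddCommMonoid N] [Module ℝ N] (μ : ι →₀ ℝ) (f : ι → M × N) :
    (μ.sum fun i a => a • f i) = (μ.sum fun i a => a • (f i).1, μ.sum fun i a => a • (f i).2) := by
  ext <;> simp [Finsupp.sum, Prod.fst_sum, Prod.snd_sum]

section LinearInequalities

variable {E : Type*} [AddCommGroup E] [Module ℝ E] [TopologicalSpace E]

@[simp] theorem WeakDual.zero_apply (x : E) : (0 : WeakDual ℝ E) x = 0 := rfl

@[simp] theorem WeakDual.add_apply (φ ψ : WeakDual ℝ E) (x : E) : (φ + ψ) x = φ x + ψ x := rfl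

@[simp] theorem WeakDual.neg_apply (φ : WeakDual ℝ E) (x : E) : (-φ) x = -φ x := rfl

@[simp] theorem WeakDual.smul_apply (a : ℝ) (φ : WeakDual ℝ E) (x : E) : (a • φ) x = a * φ x := rfl

theorem StrongDual.exists_eq_eval_add_mul (f : StrongDual ℝ (WeakDual ℝ E × ℝ)) :
    ∃ x₀ : E, ∃ s₀ : ℝ, ∀ φ r, f (φ, r) = φ x₀ + r * s₀ := by
  obtain ⟨x₀, hx₀⟩ :=
    LinearMap.dualEmbedding_surjective (topDualPairing ℝ E) (f.comp (.inl ℝ _ ℝ))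
  refine ⟨x₀, f (0, 1), fun φ r => ?_⟩
  have hsplit : (φ, r) = ContinuousLinearMap.inl ℝ _ ℝ φ + r • ((0 : WeakDual ℝ E), (1 : ℝ)) := by
    simp
  rw [hsplit, map_add, map_smul, smul_eq_mul]
  exact congrArg (· + _) (DFunLike.congr_fun hx₀ φ).symm

def validIneqs (F : Set E) : PointedCone ℝ (WeakDual ℝ E × ℝ) where
  carrier := {p | ∀ x ∈ F, p.1 x ≤ p.2}
  add_mem' hp hq x hx := by simpa using add_le_add (hp x hx) (hq x hx)
  zero_mem' x _ := by simp
  smul_mem' a p hp x hx := by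
    change ((a : ℝ) • p).1 x ≤ ((a : ℝ) • p).2
    simp only [Prod.smul_fst, Prod.smul_snd, WeakDual.smul_apply, smul_eq_mul]
    exact mul_le_mul_of_nonneg_left (hp x hx) a.2

@[simp]
theorem mem_validIneqs {F : Set E} {p : WeakDual ℝ E × ℝ} :
    p ∈ validIneqs F ↔ ∀ x ∈ F, p.1 x ≤ p.2 :=
  Iff.rfl

theorem isClosed_validIneqs (F : Set E) : IsClosed (validIneqs F : Set (WeakDual ℝ E × ℝ)) := by
  have : (validIneqs F : Set (WeakDual ℝ E × ℝ)) = ⋂ x ∈ F, {p | p.1 x ≤ p.2} := by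
    ext; simp
  rw [this]
  exact isClosed_biInter fun x _ =>
    isClosed_le ((WeakBilin.eval_continuous (topDualPairing ℝ E) x).comp continuous_fst)
      continuous_snd

variable {T : Type*} (U : T → Set (WeakDual ℝ E × ℝ))

def robustFeasibleSet : Set E := {x | ∀ t, ∀ v ∈ U t, v.1 x ≤ v.2}

theorem hull_le_validIneqs (t : T) :
    PointedCone.hull ℝ (U t ∪ {((0 : WeakDual ℝ E), (1 : ℝ))}) ≤
      validIneqs (robustFeasibleSet U) :=
  Submodule.span_le.2 <| by
    rintro v (hv | rfl) x hx
    exacts [hx t v hv, by simp]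

-- For `s₀ > 0` the witness is `-s₀⁻¹ • x₀`; for `s₀ = 0`, `-x₀` is a recession direction of the
-- feasible set along which `φ` grows without bound.
theorem exists_mem_robustFeasibleSet_lt (hF : (robustFeasibleSet U).Nonempty) {x₀ : E} {s₀ : ℝ}
    (hs₀ : 0 ≤ s₀) (hx₀ : ∀ t, ∀ v ∈ U t, 0 ≤ v.1 x₀ + v.2 * s₀) {φ : WeakDual ℝ E} {r : ℝ}
    (hφ : φ x₀ + r * s₀ < 0) : ∃ y ∈ robustFeasibleSet U, r < φ y := by
  rcases hs₀.eq_or_lt with rfl | hs₀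
  · obtain ⟨x, hx⟩ := hF
    simp only [mul_zero, add_zero] at hx₀ hφ
    obtain ⟨l, hl, hlφ⟩ : ∃ l : ℝ, 0 ≤ l ∧ l * φ x₀ = -(|r - φ x| + 1) :=
      ⟨(|r - φ x| + 1) / -φ x₀, div_nonneg (by positivity) (neg_nonneg.2 hφ.le), by
        field_simp [hφ.ne]⟩
    refine ⟨x - l • x₀, fun t v hv => ?_, ?_⟩
    · simp only [map_sub, map_smul, smul_eq_mul]
      nlinarith [hx t v hv, hx₀ t v hv]
    · simp only [map_sub, map_smul, smul_eq_mul, hlφ]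
      linarith [le_abs_self (r - φ x)]
  · refine ⟨-s₀⁻¹ • x₀, fun t v hv => ?_, ?_⟩
    · have := hx₀ t v hv
      simp only [map_smul, smul_eq_mul, neg_mul]
      rw [neg_le, ← div_eq_inv_mul, le_div_iff₀ hs₀]
      linarith
    · simp only [map_smul, smul_eq_mul, neg_mul]
      rw [lt_neg, ← div_eq_inv_mul, div_lt_iff₀ hs₀]
      linarith

theorem validIneqs_subset_of_isClosed {C : Set (WeakDual ℝ E × ℝ)} (hC : IsClosed C)
    (hconv : Convex ℝ C) (hsmul : ∀ p ∈ C, ∀ a : ℝ, 0 ≤ a → a • p ∈ C)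
    (h01 : ((0 : WeakDual ℝ E), (1 : ℝ)) ∈ C) (hUC : ∀ t, U t ⊆ C)
    (hF : (robustFeasibleSet U).Nonempty) :
    (validIneqs (robustFeasibleSet U) : Set (WeakDual ℝ E × ℝ)) ⊆ C := by
  have : LocallyConvexSpace ℝ (WeakDual ℝ E) := WeakBilin.locallyConvexSpace
  let K : ProperCone ℝ (WeakDual ℝ E × ℝ) := ⟨pointedConeOfConvex C hconv ⟨_, h01⟩ hsmul, hC⟩
  rintro ⟨φ, r⟩ hφr
  by_contra hnot
  obtain ⟨f, hfK, hf⟩ := K.hyperplane_separation_point (x₀ := (φ, r)) hnot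
  obtain ⟨x₀, s₀, hfx⟩ := StrongDual.exists_eq_eval_add_mul f
  have hs₀ : 0 ≤ s₀ := by simpa [hfx] using hfK _ h01
  have hx₀ : ∀ t, ∀ v ∈ U t, 0 ≤ v.1 x₀ + v.2 * s₀ := fun t v hv =>
    hfx v.1 v.2 ▸ hfK v (hUC t hv)
  rw [hfx] at hf
  obtain ⟨y, hy, hry⟩ := exists_mem_robustFeasibleSet_lt U hF hs₀ hx₀ hf
  exact (hφr y hy).not_gt hry

theorem coe_le_infRLIP_iff {c : WeakDual ℝ E} {r : ℝ} :
    (r : EReal) ≤ infRLIP U c ↔ ∀ x ∈ robustFeasibleSet U, r ≤ c x := by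
  simp [infRLIP, robustFeasibleSet]

theorem infRLIP_le {c : WeakDual ℝ E} {x : E} (hx : x ∈ robustFeasibleSet U) :
    infRLIP U c ≤ c x :=
  iInf_le (fun y : robustFeasibleSet U => ((c y : ℝ) : EReal)) ⟨x, hx⟩

theorem exists_infRLIP_eq_coe (hF : (robustFeasibleSet U).Nonempty) {c : WeakDual ℝ E}
    (hc : ⊥ < infRLIP U c) : ∃ m : ℝ, infRLIP U c = m := by
  obtain ⟨x, hx⟩ := hF
  exact ⟨_, (EReal.coe_toReal ((infRLIP_le U hx).trans_lt (EReal.coe_lt_top _)).ne hc.ne').symm⟩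

theorem dual_value_le_infRLIP (t : T) (μ : {u : T → WeakDual ℝ E × ℝ // ∀ s, u s ∈ U s} →₀ ℝ)
    (hμ : ∀ u, 0 ≤ μ u) :
    ((-(μ.sum fun u a => a * (u.1 t).2) : ℝ) : EReal) ≤
      infRLIP U (-(μ.sum fun u a => a • (u.1 t).1)) := by
  have hq := hull_le_validIneqs U t <| Submodule.span_mono Set.subset_union_left <|
    finsuppSum_mem_hull U t μ hμ
  rw [Finsupp.sum_smul_prodMk] at hq
  refine (coe_le_infRLIP_iff U).2 fun x hx => ?_
  simpa [smul_eq_mul] using hq x hx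

def StableRobustStrongDuality : Prop :=
  ∀ c : WeakDual ℝ E, ⊥ < infRLIP U c →
    ∃ t : T, ∃ μ : {u : T → WeakDual ℝ E × ℝ // ∀ s, u s ∈ U s} →₀ ℝ,
      (∀ u, 0 ≤ μ u) ∧ c = -(μ.sum fun u a => a • (u.1 t).1) ∧
      ((-(μ.sum fun u a => a * (u.1 t).2) : ℝ) : EReal) = infRLIP U c

theorem stableRobustStrongDuality_of_validIneqs_subset (hU : ∀ t, (U t).Nonempty)
    (hF : (robustFeasibleSet U).Nonempty)
    (hK : (validIneqs (robustFeasibleSet U) : Set (WeakDual ℝ E × ℝ)) ⊆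
      ⋃ t, (PointedCone.hull ℝ (U t ∪ {((0 : WeakDual ℝ E), (1 : ℝ))}) : Set _)) :
    StableRobustStrongDuality U := by
  intro c hc
  obtain ⟨m, hm⟩ := exists_infRLIP_eq_coe U hF hc
  have hmem : (-c, -m) ∈ validIneqs (robustFeasibleSet U) := fun x hx => by
    simpa [hm] using infRLIP_le U (c := c) hx
  obtain ⟨t, ht⟩ := Set.mem_iUnion.1 (hK hmem)
  obtain ⟨q, hq, z, hz, hqz⟩ := Submodule.mem_sup.1 <| by
    rwa [PointedCone.hull, Submodule.span_union] at ht
  obtain ⟨⟨a, ha⟩, rfl⟩ := Submodule.mem_span_singleton.1 hz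
  obtain ⟨μ, hμ, rfl⟩ := exists_finsupp_of_mem_hull hU hq
  rw [Finsupp.sum_smul_prodMk] at hqz
  simp only [Prod.ext_iff, Nonneg.mk_smul, Prod.fst_add, Prod.snd_add, Prod.smul_mk, smul_zero,
    add_zero, smul_eq_mul, mul_one] at hqz
  have hc : c = -(μ.sum fun u a => a • (u.1 t).1) := by rw [hqz.1, neg_neg]
  refine ⟨t, μ, hμ, hc, ?_⟩
  have hweak := dual_value_le_infRLIP U t μ hμ
  rw [← hc, hm, EReal.coe_le_coe_iff] at hweak
  rw [hm, EReal.coe_eq_coe_iff]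
  linarith [hqz.2]

theorem validIneqs_subset_of_stableRobustStrongDuality (hd : StableRobustStrongDuality U) :
    (validIneqs (robustFeasibleSet U) : Set (WeakDual ℝ E × ℝ)) ⊆
      ⋃ t, (PointedCone.hull ℝ (U t ∪ {((0 : WeakDual ℝ E), (1 : ℝ))}) : Set _) := by
  rintro ⟨φ, r⟩ hφr
  have hr : ((-r : ℝ) : EReal) ≤ infRLIP U (-φ) :=
    (coe_le_infRLIP_iff U).2 fun x hx => by simpa using hφr x hx
  obtain ⟨t, μ, hμ, hφ, hval⟩ := hd (-φ) ((EReal.bot_lt_coe _).trans_le hr)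
  rw [neg_inj] at hφ
  rw [← hval, EReal.coe_le_coe_iff, neg_le_neg_iff] at hr
  have hq := finsuppSum_mem_hull U t μ hμ
  rw [Finsupp.sum_smul_prodMk, ← hφ] at hq
  have hsplit : ((φ, r) : WeakDual ℝ E × ℝ) =
      (φ, μ.sum fun u a => a • (u.1 t).2) +
        (r - μ.sum fun u a => a * (u.1 t).2) • ((0 : WeakDual ℝ E), (1 : ℝ)) := by
    simp [smul_eq_mul]
  refine Set.mem_iUnion.2 ⟨t, ?_⟩
  rw [hsplit]
  exact add_mem (Submodule.span_mono Set.subset_union_left hq)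
    (PointedCone.smul_mem _ (sub_nonneg.2 hr) (PointedCone.subset_hull (by simp)))

end LinearInequalities

/-- Theorem 4.1, case i = 2: the robust moment cone
𝒩₂ = ⋃_{t∈T} co cone(𝒰_t ∪ {(0,1)}) is closed and convex iff stable robust strong
duality holds for the pair (RLIP_c)-(RLID²_c). -/
theorem stmt12 [Nonempty T] (U : T → Set (WeakDual ℝ X × ℝ)) (hU : ∀ t, (U t).Nonempty)
    (hF : {x : X | ∀ t, ∀ v ∈ U t, v.1 x ≤ v.2}.Nonempty) :
    (IsClosed (⋃ t, convexHull ℝ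
        (coneSet (U t ∪ {((0 : WeakDual ℝ X), (1 : ℝ))}))) ∧
      Convex ℝ (⋃ t, convexHull ℝ
        (coneSet (U t ∪ {((0 : WeakDual ℝ X), (1 : ℝ))})))) ↔
    (∀ c : WeakDual ℝ X, ⊥ < infRLIP U c →
      ∃ t : T, ∃ μ : {u : T → WeakDual ℝ X × ℝ // ∀ s, u s ∈ U s} →₀ ℝ,
        (∀ u, 0 ≤ μ u) ∧ c = -(μ.sum fun u a => a • (u.1 t).1) ∧
        ((-(μ.sum fun u a => a * (u.1 t).2) : ℝ) : EReal) = infRLIP U c) := by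
  have hN : (⋃ t, convexHull ℝ (coneSet (U t ∪ {((0 : WeakDual ℝ X), (1 : ℝ))}))) =
      ⋃ t, (PointedCone.hull ℝ (U t ∪ {((0 : WeakDual ℝ X), (1 : ℝ))}) : Set _) :=
    Set.iUnion_congr fun t => convexHull_coneSet_eq_hull (Set.union_nonempty.2 (.inr ⟨_, rfl⟩))
  have hweak : (⋃ t, (PointedCone.hull ℝ (U t ∪ {((0 : WeakDual ℝ X), (1 : ℝ))}) : Set _)) ⊆
      (validIneqs (robustFeasibleSet U) : Set (WeakDual ℝ X × ℝ)) :=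
    Set.iUnion_subset fun t => hull_le_validIneqs U t
  rw [hN]
  constructor
  · rintro ⟨hclosed, hconvex⟩
    obtain ⟨t₀⟩ := ‹Nonempty T›
    refine stableRobustStrongDuality_of_validIneqs_subset U hU hF
      (validIneqs_subset_of_isClosed U hclosed hconvex ?_ ?_ ?_ hF)
    · intro p hp a ha
      obtain ⟨t, ht⟩ := Set.mem_iUnion.1 hp
      exact Set.mem_iUnion.2 ⟨t, PointedCone.smul_mem _ ha ht⟩
    · exact Set.mem_iUnion.2 ⟨t₀, PointedCone.subset_hull (.inr rfl)⟩
    · exact fun t v hv => Set.mem_iUnion.2 ⟨t, PointedCone.subset_hull (.inl hv)⟩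
  · intro hd
    rw [hweak.antisymm (validIneqs_subset_of_stableRobustStrongDuality U hd)]
    exact ⟨isClosed_validIneqs _, (validIneqs _).convex⟩
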